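/- With visibility φ = 1, in the semi-synchronous model, for any protocol solving exploration with 2 ≤ k < n starting from a single 1.block, the rules R_in (0(1)1 :: move toward occupied neighbor) and R_swp (1(1)1 :: move either direction) cannot both be part of the protocol: if both are included, the adversary can produce, from the initial single 1.block of size k, a configuration indistinguishable from the initial one in one step. -/

import Mathlib

/-- Rotation of a ring configuration by `i`. -/
def rotate {n : ℕ} (γ : ZMod n → ℕ) (i : ZMod n) : ZMod n → ℕ := fun j => γ (j + i)

/-- Mirror image of a ring configuration. -/
def mirror {n : ℕ} (γ : ZMod n → ℕ) : ZMod n → ℕ := fun j => γ (-j)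

/-- Two configurations are indistinguishable if one is a rotation of the other,
or a rotation of the other's mirror. -/
def Indist {n : ℕ} (γ γ' : ZMod n → ℕ) : Prop :=
  ∃ i, γ' = rotate γ i ∨ γ' = rotate (mirror γ) i

/-- A deterministic protocol for myopic robots with visibility `φ = 1`: given the view
`(a, b, c)` (multiplicities of the left neighbor, own node, right neighbor), `moves a b c d`
holds if a robot with this view may move in direction `d` (`true` = toward the `c` side).
Since the ring is unoriented, the rule set must be invariant under reversing the view. -/
structure Protocol1 where
  moves : ℕ → ℕ → ℕ → Bool → Prop
  rev : ∀ a b c d, moves a b c d ↔ moves c b a (!d)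

/-- A robot (on an occupied node `j`) is enabled if some move is allowed by its view. -/
def enabled {n : ℕ} (P : Protocol1) (γ : ZMod n → ℕ) (j : ZMod n) : Prop :=
  0 < γ j ∧ ∃ d, P.moves (γ (j - 1)) (γ j) (γ (j + 1)) d

/-- Semi-synchronous step: the adversary activates a nonempty set of robots
(`L j`/`R j` robots of node `j` move left/right, as allowed by the protocol). -/
def SStep {n : ℕ} (P : Protocol1) (γ δ : ZMod n → ℕ) : Prop :=
  ∃ L R : ZMod n → ℕ,
    (∀ j, L j + R j ≤ γ j) ∧ (∃ j, 0 < L j + R j) ∧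
    (∀ j, 0 < L j → P.moves (γ (j - 1)) (γ j) (γ (j + 1)) false) ∧
    (∀ j, 0 < R j → P.moves (γ (j - 1)) (γ j) (γ (j + 1)) true) ∧
    (∀ j, δ j = γ j - (L j + R j) + L (j + 1) + R (j - 1))

/-- Fully synchronous step: every enabled robot moves, in a direction allowed by its rule. -/
def FStep {n : ℕ} (P : Protocol1) (γ δ : ZMod n → ℕ) : Prop :=
  ∃ L R : ZMod n → ℕ,
    (∀ j, (enabled P γ j → L j + R j = γ j) ∧ (¬ enabled P γ j → L j + R j = 0)) ∧
    (∀ j, 0 < L j → P.moves (γ (j - 1)) (γ j) (γ (j + 1)) false) ∧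
    (∀ j, 0 < R j → P.moves (γ (j - 1)) (γ j) (γ (j + 1)) true) ∧
    (∀ j, δ j = γ j - (L j + R j) + L (j + 1) + R (j - 1))

/-- A configuration is terminal when no robot is enabled. -/
def Terminal1 {n : ℕ} (P : Protocol1) (γ : ZMod n → ℕ) : Prop := ∀ j, ¬ enabled P γ j

/-!
The adversary activates only the two robots on the first two nodes of the block and lets them
trade places: the border robot, seeing `0(1)1`, steps inward by `R_in`, while its neighbour
steps outward, by `R_swp` when it sees `1(1)1` and by the mirror image of `R_in` when `k = 2`
and it sees `1(1)0`. The configuration after the step is the initial one.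
-/

theorem Indist.refl {n : ℕ} (γ : ZMod n → ℕ) : Indist γ γ :=
  ⟨0, Or.inl (funext fun j => by simp [rotate])⟩

theorem SStep.self_of_adjacent_swap {n : ℕ} [Nontrivial (ZMod n)] {P : Protocol1}
    {γ : ZMod n → ℕ} {j : ZMod n} (hj : 0 < γ j) (hj' : 0 < γ (j + 1))
    (hright : P.moves (γ (j - 1)) (γ j) (γ (j + 1)) true)
    (hleft : P.moves (γ j) (γ (j + 1)) (γ (j + 1 + 1)) false) :
    SStep P γ γ := by
  set L : ZMod n → ℕ := Pi.single (j + 1) 1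
  set R : ZMod n → ℕ := Pi.single j 1
  have hne : j ≠ j + 1 := by simp
  have hle : ∀ x, L x + R x ≤ γ x := by
    intro x
    rcases eq_or_ne x j with rfl | hxj
    · simp [L, R, hne]; omega
    rcases eq_or_ne x (j + 1) with rfl | hxj'
    · simp [L, R, hne.symm]; omega
    · simp [L, R, hxj, hxj']
  refine ⟨L, R, hle, ⟨j, by simp [R]⟩, fun x hx => ?_, fun x hx => ?_, fun x => ?_⟩
  · obtain rfl : x = j + 1 := by by_contra h; simp [L, h] at hx
    simpa using hleft
  · obtain rfl : x = j := by by_contra h; simp [R, h] at hx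
    exact hright
  · have hL : L (x + 1) = R x := by simp only [L, R, Pi.single_apply, add_left_inj]
    have hR : R (x - 1) = L x := by simp only [L, R, Pi.single_apply, sub_eq_iff_eq_add]
    rw [add_assoc, hL, hR, add_comm (R x), Nat.sub_add_cancel (hle x)]

def block (n k : ℕ) : ZMod n → ℕ := fun j => if j.val < k then 1 else 0

theorem block_natCast {n m : ℕ} (k : ℕ) (hm : m < n) :
    block n k m = if m < k then 1 else 0 := by
  simp [block, ZMod.val_cast_of_lt hm]

theorem block_neg_one {n k : ℕ} (hkn : k < n) : block n k (-1) = 0 := by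
  obtain ⟨m, rfl⟩ : ∃ m, n = m + 1 := ⟨n - 1, by omega⟩
  simp [block, ZMod.val_neg_one m, Nat.lt_succ_iff.mp hkn]

theorem rin_rswp_mutually_exclusive_general (n k : ℕ) (hk2 : 2 ≤ k) (hkn : k < n)
    (P : Protocol1)
    (hin : P.moves 0 1 1 true)
    (hswp : P.moves 1 1 1 true) :
    ∃ δ : ZMod n → ℕ,
      SStep P (fun j : ZMod n => if j.val < k then 1 else 0) δ ∧
      Indist (fun j : ZMod n => if j.val < k then 1 else 0) δ := by
  have : Fact (1 < n) := ⟨by omega⟩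
  have h0 : block n k 0 = 1 := by
    simpa [show 0 < k by omega] using block_natCast (n := n) k (m := 0) (by omega)
  have h1 : block n k 1 = 1 := by
    simpa [show 1 < k by omega] using block_natCast (n := n) k (m := 1) (by omega)
  have h2 : block n k 2 = if 2 < k then 1 else 0 := by
    exact_mod_cast block_natCast (n := n) k (m := 2) (by omega)
  have hleft : P.moves 1 1 (block n k 2) false := by
    rw [h2]
    split_ifs
    · exact (P.rev 1 1 1 true).mp hswp
    · exact (P.rev 0 1 1 true).mp hin
  show ∃ δ, SStep P (block n k) δ ∧ Indist (block n k) δ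
  refine ⟨block n k, SStep.self_of_adjacent_swap (j := 0) ?_ ?_ ?_ ?_, Indist.refl _⟩
  · simp [h0]
  · simp [h1]
  · simpa [block_neg_one hkn, h0, h1] using hin
  · simpa [h0, h1, one_add_one_eq_two] using hleft

/-- With visibility `φ = 1`, if a protocol contains both the rule
`R_in` (view `0(1)1`, move toward the occupied neighbor) and the rule `R_swp`
(view `1(1)1`, move in either direction), then from the initial configuration consisting
of a single 1.block of `k` consecutive occupied nodes (`2 ≤ k < n`), the semi-synchronous
adversary can perform one step reaching a configuration indistinguishable from the initial
one; hence (by the no-revisit theorem) the two rules cannot both be part of an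
exploration protocol. -/
theorem rin_rswp_mutually_exclusive (n k : ℕ) [NeZero n] (hk2 : 2 ≤ k) (hkn : k < n)
    (P : Protocol1)
    (hin : P.moves 0 1 1 true)
    (hswp : P.moves 1 1 1 true) :
    ∃ δ : ZMod n → ℕ,
      SStep P (fun j : ZMod n => if j.val < k then 1 else 0) δ ∧
      Indist (fun j : ZMod n => if j.val < k then 1 else 0) δ :=
  rin_rswp_mutually_exclusive_general n k hk2 hkn P hin hswp
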